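/- arXiv:1604.08837 — 4 statements merged into one kernel-verified Lean document; each statement's English description precedes it below -/
import Mathlib

section
/- Let k ≥ 2, ε ∈ {0,1}, and n = 2^k + ε. Then a self-conjugate partition λ of n is chiral if and only if v₂(f_λ) = 1. -/
namespace ChiralPaper

/-- The set of cells of the Young diagram of a partition `p` of `n`:
the 0-indexed cell `(i, j)` (row `i`, column `j`) belongs to the diagram iff
`i` is less than the number of parts of `p` that are at least `j + 1`. -/
def cells {n : ℕ} (p : Nat.Partition n) : Finset (ℕ × ℕ) :=
  (Finset.range n ×ˢ Finset.range n).filter fun c =>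
    c.1 < (p.parts.filter fun a => c.2 + 1 ≤ a).card

/-- `T` is a standard Young tableau of shape `p` (encoded as a function on `ℕ × ℕ`,
vanishing off the diagram): it maps the cells bijectively to `{1, …, n}` and is
strictly increasing along rows and down columns. -/
def IsSYT {n : ℕ} (p : Nat.Partition n) (T : ℕ × ℕ → ℕ) : Prop :=
  Set.BijOn T ↑(cells p) (Set.Icc 1 n) ∧
  (∀ x, x ∉ cells p → T x = 0) ∧
  ∀ c ∈ cells p, ∀ d ∈ cells p, c.1 ≤ d.1 → c.2 ≤ d.2 → c ≠ d → T c < T d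

/-- `f_λ`: the number of standard Young tableaux of shape `p`. -/
noncomputable def fSYT {n : ℕ} (p : Nat.Partition n) : ℕ :=
  Nat.card {T : ℕ × ℕ → ℕ // IsSYT p T}

/-- `g_λ`: the number of standard Young tableaux of shape `p` in which the entry `2`
lies in the first column, i.e. in the (0-indexed) cell `(1, 0)`. -/
noncomputable def gSYT {n : ℕ} (p : Nat.Partition n) : ℕ :=
  Nat.card {T : ℕ × ℕ → ℕ // IsSYT p T ∧ T (1, 0) = 2}

/-- A partition is chiral if `g_λ` is odd. -/
def IsChiral {n : ℕ} (p : Nat.Partition n) : Prop := Odd (gSYT p)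

/-- `C(λ) = ∑_{(i,j) ∈ λ} (j - i)`, the sum of contents of the cells. -/
def contentSum {n : ℕ} (p : Nat.Partition n) : ℤ :=
  ∑ c ∈ cells p, ((c.2 : ℤ) - (c.1 : ℤ))

/-- `b(n)`: the number of chiral partitions of `n`. -/
noncomputable def chiralCount (n : ℕ) : ℕ := Nat.card {p : Nat.Partition n // IsChiral p}

/-- `a(n)`: the number of partitions of `n` with `f_λ` odd. -/
noncomputable def oddCount (n : ℕ) : ℕ := Nat.card {p : Nat.Partition n // Odd (fSYT p)}

/-- `b_v(n)`: the number of chiral partitions of `n` with `v₂(f_λ) = v`. -/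
noncomputable def chiralCountV (v n : ℕ) : ℕ :=
  Nat.card {p : Nat.Partition n // IsChiral p ∧ padicValNat 2 (fSYT p) = v}

/-- A partition is self-conjugate iff its Young diagram is symmetric under transposition. -/
def IsSelfConjugate {n : ℕ} (p : Nat.Partition n) : Prop :=
  ∀ i j : ℕ, (i, j) ∈ cells p ↔ (j, i) ∈ cells p

/-- The hook partition `h(a, b) = (a + 1, 1^b)` of `a + b + 1`. -/
def hook (a b : ℕ) : Nat.Partition (a + b + 1) where
  parts := (a + 1) ::ₘ Multiset.replicate b 1
  parts_pos := by
    intro i hi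
    rw [Multiset.mem_cons] at hi
    rcases hi with h | h
    · omega
    · have := Multiset.eq_of_mem_replicate h
      omega
  parts_sum := by
    simp [Multiset.sum_replicate]
    omega

/-- `ν(m)`: the number of ones in the binary expansion of `m`. -/
def nu (m : ℕ) : ℕ := (Nat.digits 2 m).count 1

/-- `bin(m)`: the set of exponents in the binary expansion of `m`. -/
def binSet (m : ℕ) : Finset ℕ := (Finset.range (m + 1)).filter fun k => m.testBit k

/-- The family of parts `f i`, `i ∈ s`, is *neat*: the binary-digit sets of the parts
are pairwise disjoint and their union is the binary-digit set of the total sum. -/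
def Neat {ι : Type*} [DecidableEq ι] (s : Finset ι) (f : ι → ℕ) : Prop :=
  (∀ i ∈ s, ∀ j ∈ s, i ≠ j → Disjoint (binSet (f i)) (binSet (f j))) ∧
  s.biUnion (fun i => binSet (f i)) = binSet (∑ i ∈ s, f i)

/-- `f : ℕ → ℕ` encodes an ordered set partition of `{1, …, n}` of shape `lam`:
`f` vanishes off `{1, …, n}`, takes values in `{1, …, l}` there, and the fiber of
`(i : ℕ) + 1` has cardinality `lam i`.  (The `i`-th block is the fiber of `i + 1`.) -/
def IsOSP (n l : ℕ) (lam : Fin l → ℕ) (f : ℕ → ℕ) : Prop :=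
  (∀ x, x ∉ Finset.Icc 1 n → f x = 0) ∧
  (∀ x ∈ Finset.Icc 1 n, f x ∈ Finset.Icc 1 l) ∧
  ∀ i : Fin l, ((Finset.Icc 1 n).filter fun x => f x = (i : ℕ) + 1).card = lam i

/-- The number of ordered set partitions of shape `lam` moved by the transposition `(1 2)`. -/
noncomputable def movedCount (n l : ℕ) (lam : Fin l → ℕ) : ℕ :=
  Nat.card {f : ℕ → ℕ // IsOSP n l lam f ∧ f ∘ (Equiv.swap 1 2) ≠ f}

/-- The permutation representation `C[X_λ]` is chiral: the transposition `(1 2)` induces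
an odd permutation of `X_λ`, i.e. the number of moved points is `≡ 2 (mod 4)`. -/
def PermChiral (n l : ℕ) (lam : Fin l → ℕ) : Prop := movedCount n l lam % 4 = 2

/-- Chirality of `C[X_λ]` for a partition given as a multiset. -/
def PermChiralP {n : ℕ} (p : Nat.Partition n) : Prop :=
  PermChiral n p.parts.toList.length (fun i => p.parts.toList.get i)

/-- The `k`-th Bell number: the number of set partitions of a `k`-element set. -/
noncomputable def bell (k : ℕ) : ℕ := Nat.card (Finpartition (Finset.univ : Finset (Fin k)))

/-!
Transposition is an involution on the standard Young tableaux of a self-conjugate shape, and it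
exchanges the tableaux with `2` in cell `(1, 0)` and those with `2` in cell `(0, 1)`. For `n ≥ 2`
every tableau is of exactly one of these two kinds, so `f_λ = 2 g_λ`, and `v₂(2 g) = 1` exactly
when `g` is odd.
-/

lemma mem_cells_of_le {n : ℕ} {p : Nat.Partition n} {i j i' j' : ℕ} (h : (i, j) ∈ cells p)
    (hi : i' ≤ i) (hj : j' ≤ j) : (i', j') ∈ cells p := by
  simp only [cells, Finset.mem_filter, Finset.mem_product, Finset.mem_range] at h ⊢
  refine ⟨⟨by omega, by omega⟩, (hi.trans_lt h.2).trans_le (Multiset.card_le_card ?_)⟩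
  exact Multiset.monotone_filter_right _ fun a ha => by omega

namespace IsSYT

variable {n : ℕ} {p : Nat.Partition n} {T : ℕ × ℕ → ℕ}

lemma one_le_apply (hT : IsSYT p T) {c : ℕ × ℕ} (hc : c ∈ cells p) : 1 ≤ T c :=
  (hT.1.mapsTo hc).1

lemma mem_cells_of_apply_ne_zero (hT : IsSYT p T) {c : ℕ × ℕ} (hc : T c ≠ 0) : c ∈ cells p :=
  by_contra fun h => hc (hT.2.1 c h)

lemma exists_mem_cells_apply_eq (hT : IsSYT p T) {m : ℕ} (h1 : 1 ≤ m) (hm : m ≤ n) :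
    ∃ c ∈ cells p, T c = m :=
  hT.1.surjOn ⟨h1, hm⟩

lemma eq_zero_zero_of_apply_eq_one (hT : IsSYT p T) {c : ℕ × ℕ} (hc : c ∈ cells p)
    (h : T c = 1) : c = (0, 0) := by
  by_contra hne
  have h00 : (0, 0) ∈ cells p := mem_cells_of_le hc (Nat.zero_le _) (Nat.zero_le _)
  have := hT.2.2 _ h00 c hc (Nat.zero_le _) (Nat.zero_le _) (Ne.symm hne)
  have := hT.one_le_apply h00
  omega

lemma apply_zero_zero (hT : IsSYT p T) (hn : 1 ≤ n) : T (0, 0) = 1 := by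
  obtain ⟨c, hc, h⟩ := hT.exists_mem_cells_apply_eq le_rfl hn
  rwa [← hT.eq_zero_zero_of_apply_eq_one hc h]

/-- The entry `2` sits in a cell all of whose other predecessors hold `1`, hence are `(0, 0)`. -/
lemma apply_one_zero_eq_two_or_apply_zero_one_eq_two (hT : IsSYT p T) (hn : 2 ≤ n) :
    T (1, 0) = 2 ∨ T (0, 1) = 2 := by
  obtain ⟨⟨i, j⟩, hc, h2⟩ := hT.exists_mem_cells_apply_eq one_le_two hn
  have below : ∀ i' ≤ i, ∀ j' ≤ j, (i', j') ≠ (i, j) → i' = 0 ∧ j' = 0 := by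
    intro i' hi j' hj hne
    have hc' := mem_cells_of_le hc hi hj
    have := hT.2.2 _ hc' _ hc hi hj hne
    have := hT.one_le_apply hc'
    simpa using hT.eq_zero_zero_of_apply_eq_one hc' (by omega)
  rcases Nat.eq_zero_or_pos i with rfl | hi
  · have hj : j ≠ 0 := by
      rintro rfl
      rw [hT.apply_zero_zero (by omega)] at h2
      omega
    obtain ⟨-, hj1⟩ := below 0 le_rfl (j - 1) (Nat.sub_le j 1) (by simp; omega)
    obtain rfl : j = 1 := by omega
    exact Or.inr h2
  · obtain ⟨hi1, rfl⟩ := below (i - 1) (Nat.sub_le i 1) j le_rfl (by simp; omega)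
    obtain rfl : i = 1 := by omega
    exact Or.inl h2

lemma apply_one_zero_ne_two_iff (hT : IsSYT p T) (hn : 2 ≤ n) :
    T (1, 0) ≠ 2 ↔ T (0, 1) = 2 := by
  refine ⟨(hT.apply_one_zero_eq_two_or_apply_zero_one_eq_two hn).resolve_left, fun h h' => ?_⟩
  have := hT.1.injOn (hT.mem_cells_of_apply_ne_zero (by omega))
    (hT.mem_cells_of_apply_ne_zero (by omega)) (h'.trans h.symm)
  simp at this

lemma comp_swap (hp : IsSelfConjugate p) (hT : IsSYT p T) : IsSYT p (T ∘ Prod.swap) := by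
  have hswap : ∀ c : ℕ × ℕ, c.swap ∈ cells p ↔ c ∈ cells p := fun ⟨i, j⟩ => hp j i
  obtain ⟨hbij, hzero, hmono⟩ := hT
  refine ⟨?_, fun c hc => hzero _ ((hswap c).not.mpr hc), fun c hc d hd hi hj hne =>
    hmono _ ((hswap c).mpr hc) _ ((hswap d).mpr hd) hj hi (Prod.swap_injective.ne hne)⟩
  have hmaps : Set.MapsTo Prod.swap ↑(cells p) ↑(cells p) := fun c hc => (hswap c).mpr hc
  exact hbij.comp (Set.InvOn.bijOn ⟨fun c _ => c.swap_swap, fun c _ => c.swap_swap⟩ hmaps hmaps)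

lemma comp_swap_iff (hp : IsSelfConjugate p) : IsSYT p (T ∘ Prod.swap) ↔ IsSYT p T :=
  ⟨fun h => by simpa [Function.comp_assoc] using h.comp_swap hp, comp_swap hp⟩

end IsSYT

lemma finite_setOf_isSYT {n : ℕ} (p : Nat.Partition n) : {T | IsSYT p T}.Finite := by
  refine Set.Finite.of_finite_image (f := fun T (c : cells p) => T c) ?_ ?_
  · refine (Set.Finite.pi (t := fun _ => Set.Icc 1 n) fun _ => Set.finite_Icc 1 n).subset ?_
    rintro _ ⟨T, hT, rfl⟩ c -
    exact hT.1.mapsTo c.2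
  · intro T hT T' hT' h
    funext c
    by_cases hc : c ∈ cells p
    · exact congrFun h ⟨c, hc⟩
    · rw [hT.2.1 c hc, hT'.2.1 c hc]

lemma fSYT_eq_card_add_card {n : ℕ} (p : Nat.Partition n) (P : (ℕ × ℕ → ℕ) → Prop) :
    fSYT p = Nat.card {T // IsSYT p T ∧ P T} + Nat.card {T // IsSYT p T ∧ ¬ P T} :=
  (Set.ncard_inter_add_ncard_sdiff_eq_ncard {T | IsSYT p T} {T | P T}
    (finite_setOf_isSYT p)).symm

lemma card_isSYT_apply_zero_one_eq_two {n : ℕ} {p : Nat.Partition n} (hp : IsSelfConjugate p) :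
    Nat.card {T // IsSYT p T ∧ T (0, 1) = 2} = gSYT p :=
  Nat.card_congr <| Equiv.subtypeEquiv (Equiv.arrowCongr (Equiv.prodComm ℕ ℕ) (Equiv.refl ℕ))
    fun _ => and_congr_left' (IsSYT.comp_swap_iff hp).symm

lemma fSYT_eq_two_mul_gSYT {n : ℕ} {p : Nat.Partition n} (hp : IsSelfConjugate p)
    (hn : 2 ≤ n) : fSYT p = 2 * gSYT p := by
  have split : Nat.card {T // IsSYT p T ∧ ¬ T (1, 0) = 2} =
      Nat.card {T // IsSYT p T ∧ T (0, 1) = 2} :=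
    Nat.card_congr (Equiv.subtypeEquivRight fun T =>
      and_congr_right fun hT => hT.apply_one_zero_ne_two_iff hn)
  rw [fSYT_eq_card_add_card p (· (1, 0) = 2), split, card_isSYT_apply_zero_one_eq_two hp,
    gSYT, two_mul]

lemma padicValNat_two_mul_eq_one_iff (m : ℕ) : padicValNat 2 (2 * m) = 1 ↔ Odd m := by
  rcases eq_or_ne m 0 with rfl | hm
  · simp
  rw [padicValNat.mul two_ne_zero hm, padicValNat.self one_lt_two, add_eq_left,
    padicValNat.eq_zero_iff, Nat.odd_iff]
  omega

theorem selfConjugate_chiral_iff_general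
    (k ε : ℕ) (hk : 2 ≤ k) (p : Nat.Partition (2 ^ k + ε))
    (hp : IsSelfConjugate p) :
    IsChiral p ↔ padicValNat 2 (fSYT p) = 1 := by
  have hn : 2 ≤ 2 ^ k + ε := (Nat.le_self_pow (by omega) 2).trans (Nat.le_add_right _ _)
  rw [fSYT_eq_two_mul_gSYT hp hn, padicValNat_two_mul_eq_one_iff, IsChiral]

theorem selfConjugate_chiral_iff
    (k ε : ℕ) (hk : 2 ≤ k) (hε : ε ≤ 1) (p : Nat.Partition (2 ^ k + ε))
    (hp : IsSelfConjugate p) :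
    IsChiral p ↔ padicValNat 2 (fSYT p) = 1 :=
  selfConjugate_chiral_iff_general k ε hk p hp

end ChiralPaper
end

section
/- For all integers a ≥ 0 and b ≥ 0, the hook partition h(a,b) = (a+1, 1^b) (a partition of a+b+1) is chiral if and only if b > 0 and the binomial coefficient binom(a+b−1, a) is odd. -/
namespace Finset

variable (s : Finset ℕ) {i : ℕ}

theorem nth_mem_of_lt_card (hi : i < #s) : Nat.nth (· ∈ s) i ∈ s :=
  Nat.nth_mem_of_lt_card s.finite_toSet (by simpa using hi)

theorem nth_strictMonoOn : StrictMonoOn (Nat.nth (· ∈ s)) (Set.Iio #s) := by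
  simpa using Nat.nth_strictMonoOn (p := (· ∈ s)) s.finite_toSet

theorem nth_eq_zero_of_card_le (hi : #s ≤ i) : Nat.nth (· ∈ s) i = 0 :=
  Nat.nth_of_card_le s.finite_toSet (by simpa using hi)

theorem exists_lt_card_nth_eq {x : ℕ} (hx : x ∈ s) : ∃ i < #s, Nat.nth (· ∈ s) i = x := by
  simpa using Nat.exists_lt_card_finite_nth_eq (p := (· ∈ s)) s.finite_toSet hx

theorem eqOn_nth_of_strictMonoOn_of_mapsTo {f : ℕ → ℕ} (hmono : StrictMonoOn f (Set.Iio #s))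
    (hmaps : Set.MapsTo f (Set.Iio #s) s) : Set.EqOn f (Nat.nth (· ∈ s)) (Set.Iio #s) := by
  have hdom : {n : ℕ | ∀ hf : (Set.ofPred (· ∈ s)).Finite, n < #hf.toFinset} = Set.Iio #s :=
    Set.ext fun _ => by simp
  have hsurj : Set.SurjOn f (Set.Iio #s) s := by
    simpa using surjOn_of_injOn_of_card_le (s := range #s) f (by simpa using hmaps)
      (by simpa using hmono.injOn) (by simp)
  rw [← hdom] at hmono hmaps hsurj ⊢
  exact Nat.eq_nth_of_strictMonoOn_of_mapsTo_of_surjOn f hsurj hmaps hmono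

theorem nth_zero_eq_one (h0 : 0 ∉ s) (h1 : 1 ∈ s) :
    Nat.nth (· ∈ s) 0 = 1 := by
  simpa [Nat.count_succ, h0] using Nat.nth_count (p := (· ∈ s)) h1

theorem nth_one_eq_two (h0 : 0 ∉ s) (h1 : 1 ∈ s) (h2 : 2 ∈ s) :
    Nat.nth (· ∈ s) 1 = 2 := by
  simpa [Nat.count_succ, h0, h1] using Nat.nth_count (p := (· ∈ s)) h2

end Finset

namespace ChiralPaper

open Finset

theorem IsSYT.apply_zero_zero_s7 {n : ℕ} {p : Nat.Partition n} {T : ℕ × ℕ → ℕ}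
    (hT : IsSYT p T) (h00 : (0, 0) ∈ cells p) : T (0, 0) = 1 := by
  have hpos := hT.1.mapsTo h00
  obtain ⟨c, hc, hc1⟩ :=
    hT.1.surjOn (show 1 ∈ Set.Icc 1 n from ⟨le_rfl, hpos.1.trans hpos.2⟩)
  by_contra hne
  have := hT.2.2 _ h00 c hc (Nat.zero_le _) (Nat.zero_le _) (by rintro rfl; exact hne hc1)
  have := hpos.1
  omega

theorem mem_cells_hook {a b : ℕ} {c : ℕ × ℕ} :
    c ∈ cells (hook a b) ↔ (c.2 = 0 ∧ c.1 ≤ b) ∨ (c.1 = 0 ∧ c.2 ≤ a) := by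
  have hfilter : (Multiset.replicate b 1).filter (fun x => c.2 + 1 ≤ x) =
      if c.2 = 0 then Multiset.replicate b 1 else 0 := by
    split_ifs with h
    · exact Multiset.filter_eq_self.2 fun x hx => by rw [Multiset.eq_of_mem_replicate hx]; omega
    · exact Multiset.filter_eq_nil.2 fun x hx => by rw [Multiset.eq_of_mem_replicate hx]; omega
  simp only [cells, hook, mem_filter, mem_product, mem_range, Multiset.filter_cons, hfilter]
  split_ifs <;> simp <;> omega

theorem isSYT_hook_iff {a b : ℕ} {T : ℕ × ℕ → ℕ} :
    IsSYT (hook a b) T ↔ Set.BijOn T ↑(cells (hook a b)) (Set.Icc 1 (a + b + 1)) ∧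
      (∀ c ∉ cells (hook a b), T c = 0) ∧
      StrictMonoOn (fun i => T (i, 0)) (Set.Iic b) ∧
      StrictMonoOn (fun j => T (0, j)) (Set.Iic a) := by
  refine and_congr_right fun _ => and_congr_right fun _ =>
    ⟨fun h => ⟨?_, ?_⟩, fun ⟨hcol, hrow⟩ => ?_⟩
  · intro i hi i' hi' hii'
    exact h (i, 0) (mem_cells_hook.2 (.inl ⟨rfl, hi⟩)) (i', 0)
      (mem_cells_hook.2 (.inl ⟨rfl, hi'⟩)) hii'.le le_rfl (by simp [hii'.ne])
  · intro j hj j' hj' hjj'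
    exact h (0, j) (mem_cells_hook.2 (.inr ⟨rfl, hj⟩)) (0, j')
      (mem_cells_hook.2 (.inr ⟨rfl, hj'⟩)) le_rfl hjj'.le (by simp [hjj'.ne])
  · rintro ⟨i, j⟩ hc ⟨i', j'⟩ hd hi hj hne
    simp only [mem_cells_hook, ne_eq, Prod.mk.injEq] at hc hd hi hj hne
    -- comparable cells of a hook lie both in its first column or both in its first row
    rcases hc with ⟨rfl, hc⟩ | ⟨rfl, hc⟩ <;> rcases hd with ⟨rfl, hd⟩ | ⟨rfl, hd⟩
    · exact hcol hc hd (by omega)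
    · obtain rfl : i = 0 := by omega
      exact hrow (by simp) hd (by omega)
    · obtain rfl : j = 0 := by omega
      exact hcol (by simp) hd (by omega)
    · exact hrow hc hd (by omega)

def hookColumn (S : Finset ℕ) : Finset ℕ := insert 1 (insert 2 S)

def hookRow (n : ℕ) (S : Finset ℕ) : Finset ℕ := Icc 1 n \ insert 2 S

-- `Nat.nth` is `0` past the end of a finite set, so this vanishes off the hook of the right
-- size.
noncomputable def hookTableau (n : ℕ) (S : Finset ℕ) (c : ℕ × ℕ) : ℕ :=
  if c.2 = 0 then Nat.nth (· ∈ hookColumn S) c.1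
  else if c.1 = 0 then Nat.nth (· ∈ hookRow n S) c.2 else 0

section HookTableau

variable {n : ℕ} {S : Finset ℕ}

theorem notMem_of_subset_Icc_three (hS : S ⊆ Icc 3 n) {x : ℕ} (hx : x < 3) : x ∉ S :=
  fun h => by have := mem_Icc.1 (hS h); omega

theorem insert_two_subset_Icc (hS : S ⊆ Icc 3 n) (hn : 2 ≤ n) : insert 2 S ⊆ Icc 1 n :=
  insert_subset (mem_Icc.2 ⟨by omega, hn⟩) (hS.trans (Icc_subset_Icc_left (by omega)))

theorem card_hookColumn (hS : S ⊆ Icc 3 n) : #(hookColumn S) = #S + 2 := by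
  have h2 := notMem_of_subset_Icc_three hS (show 2 < 3 by omega)
  rw [hookColumn, card_insert_of_notMem (by simp [notMem_of_subset_Icc_three hS]),
    card_insert_of_notMem h2]

theorem card_hookRow (hS : S ⊆ Icc 3 n) (hn : 2 ≤ n) : #(hookRow n S) = n - 1 - #S := by
  rw [hookRow, card_sdiff_of_subset (insert_two_subset_Icc hS hn),
    card_insert_of_notMem (notMem_of_subset_Icc_three hS (by omega)), Nat.card_Icc]
  omega

theorem hookColumn_subset_Icc (hS : S ⊆ Icc 3 n) (hn : 2 ≤ n) : hookColumn S ⊆ Icc 1 n :=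
  insert_subset (mem_Icc.2 ⟨le_rfl, by omega⟩) (insert_two_subset_Icc hS hn)

theorem eq_one_of_mem_hookColumn_of_mem_hookRow {x : ℕ} (hC : x ∈ hookColumn S)
    (hR : x ∈ hookRow n S) : x = 1 :=
  (mem_insert.1 hC).resolve_right (mem_sdiff.1 hR).2

theorem nth_hookColumn_zero (hS : S ⊆ Icc 3 n) : Nat.nth (· ∈ hookColumn S) 0 = 1 :=
  nth_zero_eq_one _ (by simp [hookColumn, notMem_of_subset_Icc_three hS]) (by simp [hookColumn])

theorem nth_hookColumn_one (hS : S ⊆ Icc 3 n) : Nat.nth (· ∈ hookColumn S) 1 = 2 :=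
  nth_one_eq_two _ (by simp [hookColumn, notMem_of_subset_Icc_three hS])
    (by simp [hookColumn]) (by simp [hookColumn])

theorem nth_hookRow_zero (hS : S ⊆ Icc 3 n) (hn : 1 ≤ n) : Nat.nth (· ∈ hookRow n S) 0 = 1 :=
  nth_zero_eq_one _ (by simp [hookRow])
    (by simp [hookRow, hn, notMem_of_subset_Icc_three hS])

theorem nth_hookColumn_eq_nth_hookRow (hS : S ⊆ Icc 3 n) (hn : 1 ≤ n) {i j : ℕ}
    (hi : i < #(hookColumn S)) (hj : j < #(hookRow n S))
    (h : Nat.nth (· ∈ hookColumn S) i = Nat.nth (· ∈ hookRow n S) j) : i = 0 ∧ j = 0 := by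
  have h1 := eq_one_of_mem_hookColumn_of_mem_hookRow (nth_mem_of_lt_card _ hi)
    (h ▸ nth_mem_of_lt_card _ hj)
  have h0C : 0 < #(hookColumn S) := by omega
  have h0R : 0 < #(hookRow n S) := by omega
  constructor
  · exact (nth_strictMonoOn _).injOn hi h0C (h1.trans (nth_hookColumn_zero hS).symm)
  · exact (nth_strictMonoOn _).injOn hj h0R (h ▸ h1.trans (nth_hookRow_zero hS hn).symm)

theorem hookTableau_col (i : ℕ) : hookTableau n S (i, 0) = Nat.nth (· ∈ hookColumn S) i :=
  if_pos rfl

theorem hookTableau_row (hS : S ⊆ Icc 3 n) (hn : 1 ≤ n) (j : ℕ) :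
    hookTableau n S (0, j) = Nat.nth (· ∈ hookRow n S) j := by
  rcases Nat.eq_zero_or_pos j with rfl | hj
  · rw [hookTableau_col, nth_hookColumn_zero hS, nth_hookRow_zero hS hn]
  · exact (if_neg hj.ne').trans (if_pos rfl)

variable {a b : ℕ}

theorem bijOn_hookTableau (hb : 1 ≤ b) (hS : S ⊆ Icc 3 (a + b + 1)) (hcard : #S = b - 1) :
    Set.BijOn (hookTableau (a + b + 1) S) ↑(cells (hook a b)) (Set.Icc 1 (a + b + 1)) := by
  have hC : #(hookColumn S) = b + 1 := by rw [card_hookColumn hS]; omega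
  have hR : #(hookRow (a + b + 1) S) = a + 1 := by rw [card_hookRow hS (by omega)]; omega
  have hrow := hookTableau_row hS (show 1 ≤ a + b + 1 by omega)
  refine ⟨?_, ?_, ?_⟩
  · rintro ⟨i, j⟩ hc
    rw [← coe_Icc]
    rcases mem_cells_hook.1 hc with ⟨rfl, hi⟩ | ⟨rfl, hj⟩
    · rw [hookTableau_col]
      exact hookColumn_subset_Icc hS (by omega) ((hookColumn S).nth_mem_of_lt_card (by omega))
    · rw [hrow]
      exact sdiff_subset ((hookRow (a + b + 1) S).nth_mem_of_lt_card (by omega))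
  · rintro ⟨i, j⟩ hc ⟨i', j'⟩ hd he
    simp only [mem_coe, mem_cells_hook] at hc hd
    rcases hc with ⟨rfl, hi⟩ | ⟨rfl, hj⟩ <;>
      rcases hd with ⟨rfl, hi'⟩ | ⟨rfl, hj'⟩ <;>
      simp only [hookTableau_col, hrow] at he
    · rw [(nth_strictMonoOn _).injOn (by simp; omega) (by simp; omega) he]
    · obtain ⟨rfl, rfl⟩ := nth_hookColumn_eq_nth_hookRow hS (by omega) (by omega) (by omega) he
      rfl
    · obtain ⟨rfl, rfl⟩ :=
        nth_hookColumn_eq_nth_hookRow hS (by omega) (by omega) (by omega) he.symm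
      rfl
    · rw [(nth_strictMonoOn _).injOn (by simp; omega) (by simp; omega) he]
  · intro x hx
    by_cases hxC : x ∈ hookColumn S
    · obtain ⟨i, hi, rfl⟩ := (hookColumn S).exists_lt_card_nth_eq hxC
      exact ⟨(i, 0), mem_cells_hook.2 (.inl ⟨rfl, by omega⟩), hookTableau_col i⟩
    · have hxR : x ∈ hookRow (a + b + 1) S :=
        mem_sdiff.2 ⟨by simpa using hx, fun h => hxC (mem_insert_of_mem h)⟩
      obtain ⟨j, hj, rfl⟩ := (hookRow (a + b + 1) S).exists_lt_card_nth_eq hxR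
      exact ⟨(0, j), mem_cells_hook.2 (.inr ⟨rfl, by omega⟩), hrow j⟩

theorem isSYT_hookTableau (hb : 1 ≤ b) (hS : S ⊆ Icc 3 (a + b + 1)) (hcard : #S = b - 1) :
    IsSYT (hook a b) (hookTableau (a + b + 1) S) := by
  have hC : #(hookColumn S) = b + 1 := by rw [card_hookColumn hS]; omega
  have hR : #(hookRow (a + b + 1) S) = a + 1 := by rw [card_hookRow hS (by omega)]; omega
  have hrow := hookTableau_row hS (show 1 ≤ a + b + 1 by omega)
  refine isSYT_hook_iff.2 ⟨bijOn_hookTableau hb hS hcard, ?_, ?_, ?_⟩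
  · rintro ⟨i, j⟩ hc
    simp only [mem_cells_hook, not_or, not_and, not_le] at hc
    by_cases hj : j = 0
    · subst hj
      rw [hookTableau_col, nth_eq_zero_of_card_le _ (by omega)]
    by_cases hi : i = 0
    · subst hi
      rw [hrow, nth_eq_zero_of_card_le _ (by omega)]
    simp [hookTableau, hi, hj]
  · simp_rw [hookTableau_col, ← Set.Iio_add_one_eq_Iic, ← hC]
    exact nth_strictMonoOn _
  · simp_rw [hrow, ← Set.Iio_add_one_eq_Iic, ← hR]
    exact nth_strictMonoOn _

theorem hookTableau_one_zero (hS : S ⊆ Icc 3 n) : hookTableau n S (1, 0) = 2 := by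
  rw [hookTableau_col, nth_hookColumn_one hS]

end HookTableau

def hookColumnTail (b : ℕ) (T : ℕ × ℕ → ℕ) : Finset ℕ :=
  (Icc 2 b).image fun i => T (i, 0)

section HookColumnTail

variable {a b : ℕ} {T : ℕ × ℕ → ℕ}

theorem hookColumnTail_subset (hT : IsSYT (hook a b) T) (h2 : T (1, 0) = 2) :
    hookColumnTail b T ⊆ Icc 3 (a + b + 1) := by
  obtain ⟨hbij, -, hcol, -⟩ := isSYT_hook_iff.1 hT
  simp only [subset_iff, hookColumnTail, mem_image, mem_Icc]
  rintro _ ⟨i, hi, rfl⟩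
  have hgt : T (1, 0) < T (i, 0) := hcol (by simp; omega) (by simp; omega) (by omega)
  exact ⟨by omega, (hbij.mapsTo (mem_cells_hook.2 (.inl ⟨rfl, hi.2⟩))).2⟩

theorem card_hookColumnTail (hT : IsSYT (hook a b) T) : #(hookColumnTail b T) = b - 1 := by
  obtain ⟨-, -, hcol, -⟩ := isSYT_hook_iff.1 hT
  rw [hookColumnTail, card_image_of_injOn (hcol.injOn.mono fun i hi => by simp at hi ⊢; omega),
    Nat.card_Icc]
  omega

theorem mapsTo_hookColumn (hT : IsSYT (hook a b) T) (h2 : T (1, 0) = 2) :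
    Set.MapsTo (fun i => T (i, 0)) (Set.Iic b) (hookColumn (hookColumnTail b T)) := by
  have h00 := hT.apply_zero_zero_s7 (mem_cells_hook.2 (.inl ⟨rfl, Nat.zero_le _⟩))
  intro i hi
  rcases Nat.lt_or_ge i 2 with hi2 | hi2
  · interval_cases i <;> simp [hookColumn, h00, h2]
  · exact mem_insert_of_mem (mem_insert_of_mem (mem_image_of_mem _ (mem_Icc.2 ⟨hi2, hi⟩)))

theorem mapsTo_hookRow (hb : 1 ≤ b) (hT : IsSYT (hook a b) T) (h2 : T (1, 0) = 2) :
    Set.MapsTo (fun j => T (0, j)) (Set.Iic a) (hookRow (a + b + 1) (hookColumnTail b T)) := by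
  intro j hj
  have hcell : (0, j) ∈ cells (hook a b) := mem_cells_hook.2 (.inr ⟨rfl, hj⟩)
  refine mem_sdiff.2 ⟨by simpa using hT.1.mapsTo hcell, fun h => ?_⟩
  obtain ⟨i, hi1, hib, he⟩ : ∃ i, 1 ≤ i ∧ i ≤ b ∧ T (i, 0) = T (0, j) := by
    rcases mem_insert.1 h with h | h
    · exact ⟨1, le_rfl, hb, h2.trans h.symm⟩
    · obtain ⟨i, hi, he⟩ := mem_image.1 h
      exact ⟨i, by simp at hi; omega, by simp at hi; omega, he⟩
  have := hT.1.injOn (mem_cells_hook.2 (.inl ⟨rfl, hib⟩)) hcell he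
  simp at this
  omega

theorem hookTableau_hookColumnTail (hb : 1 ≤ b) (hT : IsSYT (hook a b) T) (h2 : T (1, 0) = 2) :
    hookTableau (a + b + 1) (hookColumnTail b T) = T := by
  set S := hookColumnTail b T
  have hS := hookColumnTail_subset hT h2
  have hcard := card_hookColumnTail hT
  have hC : Set.Iio #(hookColumn S) = Set.Iic b := by
    rw [card_hookColumn hS, hcard, ← Set.Iio_add_one_eq_Iic]; congr 1; omega
  have hR : Set.Iio #(hookRow (a + b + 1) S) = Set.Iic a := by
    rw [card_hookRow hS (by omega), hcard, ← Set.Iio_add_one_eq_Iic]; congr 1; omega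
  obtain ⟨-, hzero, hcol, hrow⟩ := isSYT_hook_iff.1 hT
  -- strictly increasing enumerations of the same finite set coincide
  have hcolEq := (hookColumn S).eqOn_nth_of_strictMonoOn_of_mapsTo (hC ▸ hcol)
    (hC ▸ mapsTo_hookColumn hT h2)
  have hrowEq := (hookRow (a + b + 1) S).eqOn_nth_of_strictMonoOn_of_mapsTo (hR ▸ hrow)
    (hR ▸ mapsTo_hookRow hb hT h2)
  funext ⟨i, j⟩
  by_cases hc : (i, j) ∈ cells (hook a b)
  · rcases mem_cells_hook.1 hc with ⟨rfl, hi⟩ | ⟨rfl, hj⟩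
    · rw [hookTableau_col]
      exact (hcolEq (hC ▸ hi)).symm
    · rw [hookTableau_row hS (by omega)]
      exact (hrowEq (hR ▸ hj)).symm
  · rw [hzero _ hc, (isSYT_hookTableau hb hS hcard).2.1 _ hc]

end HookColumnTail

theorem hookColumnTail_hookTableau {n b : ℕ} {S : Finset ℕ} (hS : S ⊆ Icc 3 n)
    (hcard : #S = b - 1) : hookColumnTail b (hookTableau n S) = S := by
  have hC : #(hookColumn S) = #S + 2 := card_hookColumn hS
  ext x
  simp only [hookColumnTail, mem_image, mem_Icc, hookTableau_col]
  constructor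
  · rintro ⟨i, ⟨hi2, hib⟩, rfl⟩
    have hgt : 2 < Nat.nth (· ∈ hookColumn S) i := nth_hookColumn_one hS ▸
      nth_strictMonoOn _ (by simp [hC]) (by simp [hC]; omega) (by omega : 1 < i)
    rcases mem_insert.1 (nth_mem_of_lt_card (hookColumn S) (i := i) (by omega)) with h | h
    · omega
    rcases mem_insert.1 h with h | h
    · omega
    · exact h
  · intro hx
    obtain ⟨i, hi, rfl⟩ := exists_lt_card_nth_eq (hookColumn S)
      (mem_insert_of_mem (mem_insert_of_mem hx))
    have hi0 : i ≠ 0 := by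
      rintro rfl; exact notMem_of_subset_Icc_three hS (by omega) (nth_hookColumn_zero hS ▸ hx)
    have hi1 : i ≠ 1 := by
      rintro rfl; exact notMem_of_subset_Icc_three hS (by omega) (nth_hookColumn_one hS ▸ hx)
    exact ⟨i, ⟨by omega, by omega⟩, rfl⟩

noncomputable def hookTableauEquiv {a b : ℕ} (hb : 1 ≤ b) :
    {S // S ∈ powersetCard (b - 1) (Icc 3 (a + b + 1))} ≃
      {T : ℕ × ℕ → ℕ // IsSYT (hook a b) T ∧ T (1, 0) = 2} where
  toFun S := ⟨hookTableau (a + b + 1) S, isSYT_hookTableau hb (mem_powersetCard.1 S.2).1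
    (mem_powersetCard.1 S.2).2, hookTableau_one_zero (mem_powersetCard.1 S.2).1⟩
  invFun T := ⟨hookColumnTail b T, mem_powersetCard.2
    ⟨hookColumnTail_subset T.2.1 T.2.2, card_hookColumnTail T.2.1⟩⟩
  left_inv S := Subtype.ext <|
    hookColumnTail_hookTableau (mem_powersetCard.1 S.2).1 (mem_powersetCard.1 S.2).2
  right_inv T := Subtype.ext <| hookTableau_hookColumnTail hb T.2.1 T.2.2

theorem gSYT_hook {a b : ℕ} (hb : 1 ≤ b) : gSYT (hook a b) = (a + b - 1).choose a := by
  rw [gSYT, ← Nat.card_congr (hookTableauEquiv hb), Nat.card_eq_finsetCard, card_powersetCard,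
    Nat.card_Icc, ← Nat.choose_symm (by omega)]
  congr 1; omega

theorem gSYT_hook_zero (a : ℕ) : gSYT (hook a 0) = 0 := by
  have h10 : (1, 0) ∉ cells (hook a 0) := by simp [mem_cells_hook]
  rw [gSYT, Nat.card_eq_zero]
  exact .inl ⟨fun T => by simpa [T.2.1.2.1 _ h10] using T.2.2⟩

theorem hook_chiral_iff (a b : ℕ) :
    IsChiral (hook a b) ↔ 0 < b ∧ Odd ((a + b - 1).choose a) := by
  rcases Nat.eq_zero_or_pos b with rfl | hb
  · simp [IsChiral, gSYT_hook_zero]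
  · simp [IsChiral, gSYT_hook hb, hb]

end ChiralPaper
end

section
/- Let n ≥ 2 and let λ = (λ₁,…,λ_l) be a partition of n. Then the number of ordered set partitions x ∈ X_λ in which the elements 1 and 2 lie in different blocks equals 2·∑_{1≤i<j≤l} multinomial(n−2; λ₁,…,λ_i−1,…,λ_j−1,…,λ_l). Consequently the permutation representation C[X_λ] is chiral if and only if ∑_{1≤i<j≤l} multinomial(n−2; λ₁,…,λ_i−1,…,λ_j−1,…,λ_l) is odd. -/
/-!
An ordered set partition of shape `λ` in which `1` and `2` lie in distinct blocks `i ≠ j` is a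
choice of `(i, j)` together with an ordered set partition of `{3, …, n}` whose shape is `λ` with one
element removed from blocks `i` and `j`. Ordered set partitions of a fixed shape are counted by the
multinomial coefficient: they form one orbit of `Perm α` acting on `α → ι`, and the stabiliser is
the product of the symmetric groups of the fibres. The pairs `(i, j)` and `(j, i)` contribute
equally, which gives the factor `2`, and `2 S ≡ 2 (mod 4)` exactly when `S` is odd.
-/

namespace ChiralPaper

open Equiv MulAction Finset
open scoped Nat

section FiberCard

variable {α ι : Type*} [Fintype α]

theorem orbit_domMulAct_perm_eq [DecidableEq ι] (f : α → ι) :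
    orbit (Perm α)ᵈᵐᵃ f =
      {g | ∀ i, Fintype.card {a // g a = i} = Fintype.card {a // f a = i}} := by
  ext g
  constructor
  · rintro ⟨σ, rfl⟩ i
    exact Fintype.card_congr ((DomMulAct.mk.symm σ).subtypeEquiv fun _ => Iff.rfl)
  · intro hg
    let τ := ofFiberEquiv fun i => Fintype.equivOfCardEq (hg i)
    exact ⟨DomMulAct.mk τ, funext fun a => ofFiberEquiv_map _ a⟩

variable [DecidableEq α] [Fintype ι] [DecidableEq ι]

theorem card_fiberCard_eq_mul_prod_factorial (f : α → ι) :
    Nat.card {g : α → ι // ∀ i, Fintype.card {a // g a = i} = Fintype.card {a // f a = i}} *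
      ∏ i, (Fintype.card {a // f a = i})! = (Fintype.card α)! := by
  have hstab : Nat.card (stabilizer (Perm α)ᵈᵐᵃ f) = ∏ i, (Fintype.card {a // f a = i})! := by
    rw [← DomMulAct.stabilizer_card, ← Nat.card_eq_fintype_card]
    exact Nat.card_congr (subtypeEquiv DomMulAct.mk.symm fun _ => DomMulAct.mem_stabilizer_iff)
  have horbit : (stabilizer (Perm α)ᵈᵐᵃ f).index =
      Nat.card {g : α → ι // ∀ i, Fintype.card {a // g a = i} = Fintype.card {a // f a = i}} := by
    rw [index_stabilizer, orbit_domMulAct_perm_eq]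
    rfl
  rw [← hstab, ← horbit, mul_comm, Subgroup.card_mul_index, Nat.card_congr DomMulAct.mk.symm,
    Nat.card_eq_fintype_card, Fintype.card_perm]

theorem card_fiberCard_eq_multinomial (μ : ι → ℕ) (hμ : ∑ i, μ i = Fintype.card α) :
    Nat.card {g : α → ι // ∀ i, Fintype.card {a // g a = i} = μ i} = Nat.multinomial univ μ := by
  obtain ⟨e⟩ : Nonempty (α ≃ Σ i, Fin (μ i)) := Fintype.card_eq.mp (by simp [hμ])
  have he : ∀ i, Fintype.card {a // (e a).1 = i} = μ i := fun i => by
    rw [Fintype.card_congr (e.subtypeEquiv (q := fun b => b.1 = i) fun _ => Iff.rfl),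
      Fintype.card_congr (sigmaSubtype i), Fintype.card_fin]
  have key := card_fiberCard_eq_mul_prod_factorial fun a => (e a).1
  simp only [he] at key
  rw [← hμ, ← Nat.multinomial_spec univ μ, mul_comm] at key
  exact Nat.eq_of_mul_eq_mul_left (by positivity) key

end FiberCard

section DecrementPair

variable {ι : Type*} [DecidableEq ι]

def decrementPair (lam : ι → ℕ) (q : ι × ι) : ι → ℕ :=
  Function.update (Function.update lam q.1 (lam q.1 - 1)) q.2 (lam q.2 - 1)

theorem decrementPair_swap (lam : ι → ℕ) (q : ι × ι) :
    decrementPair lam q.swap = decrementPair lam q := by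
  obtain ⟨i, j⟩ := q
  unfold decrementPair
  rcases eq_or_ne i j with rfl | h
  · rfl
  · exact Function.update_comm h.symm _ _ _

theorem decrementPair_add {lam : ι → ℕ} {q : ι × ι} (hq : q.1 ≠ q.2) (h₁ : 0 < lam q.1)
    (h₂ : 0 < lam q.2) (i : ι) :
    decrementPair lam q i + (if q.1 = i then 1 else 0) + (if q.2 = i then 1 else 0) = lam i := by
  obtain ⟨j, k⟩ := q
  simp only [decrementPair, Function.update_apply] at *
  split_ifs <;> subst_vars <;> first | omega | contradiction

theorem sum_decrementPair_add_two [Fintype ι] {lam : ι → ℕ} {q : ι × ι} (hq : q.1 ≠ q.2)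
    (h₁ : 0 < lam q.1) (h₂ : 0 < lam q.2) :
    ∑ i, decrementPair lam q i + 2 = ∑ i, lam i := by
  simp only [← decrementPair_add hq h₁ h₂, sum_add_distrib, sum_ite_eq, mem_univ, if_true]

end DecrementPair

section PairOfPoints

variable {α ι : Type*} [Fintype α] [DecidableEq α] {a b : α}

def piSplitAtPair (hab : a ≠ b) : (α → ι) ≃ (ι × ι) × (({a, b}ᶜ : Finset α) → ι) where
  toFun g := ((g a, g b), fun x => g x)
  invFun p x :=
    if ha : x = a then p.1.1 else if hb : x = b then p.1.2 else p.2 ⟨x, by simp [ha, hb]⟩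
  left_inv g := by
    funext x
    by_cases ha : x = a
    · simp [ha]
    by_cases hb : x = b
    · simp [hb, hab.symm]
    simp [ha, hb]
  right_inv p := by
    ext x
    · simp
    · simp [hab.symm]
    · obtain ⟨ha, hb⟩ : (x : α) ≠ a ∧ (x : α) ≠ b := by simpa [not_or] using x.2
      simp [ha, hb]

variable [DecidableEq ι]

theorem card_fiber_eq_card_fiber_compl_pair (hab : a ≠ b) (g : α → ι) (i : ι) :
    Fintype.card {x // g x = i} =
      Fintype.card {x : ({a, b}ᶜ : Finset α) // g x = i} +
        (if g a = i then 1 else 0) + (if g b = i then 1 else 0) := by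
  simp only [Fintype.card_subtype, card_filter]
  rw [← sum_add_sum_compl {a, b}, sum_pair hab,
    sum_coe_sort ({a, b}ᶜ : Finset α) fun x => if g x = i then 1 else 0]
  ring

theorem card_fiberCard_eq_and_ne [Fintype ι] (hab : a ≠ b) {lam : ι → ℕ}
    (hpos : ∀ i, 0 < lam i) (hsum : ∑ i, lam i = Fintype.card α) :
    Nat.card {g : α → ι // (∀ i, Fintype.card {x // g x = i} = lam i) ∧ g a ≠ g b} =
      ∑ q ∈ univ.filter (fun q : ι × ι => q.1 ≠ q.2),
        Nat.multinomial univ (decrementPair lam q) := by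
  have hsplit : ∀ g : α → ι, ((∀ i, Fintype.card {x // g x = i} = lam i) ∧ g a ≠ g b) ↔
      g a ≠ g b ∧ ∀ i, Fintype.card {x : ({a, b}ᶜ : Finset α) // g x = i} =
        decrementPair lam (g a, g b) i := fun g => by
    rw [and_comm]
    refine and_congr_right fun hne => forall_congr' fun i => ?_
    have := decrementPair_add (q := (g a, g b)) hne (hpos _) (hpos _) i
    dsimp only at this
    rw [card_fiber_eq_card_fiber_compl_pair hab g i]
    omega
  have hcard : Fintype.card ({a, b}ᶜ : Finset α) + 2 = Fintype.card α := by
    have := card_le_univ ({a, b} : Finset α)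
    rw [Fintype.card_coe, card_compl, card_pair hab] at *
    omega
  calc _ = Nat.card {p : (ι × ι) × (({a, b}ᶜ : Finset α) → ι) // p.1.1 ≠ p.1.2 ∧
          ∀ i, Fintype.card {x // p.2 x = i} = decrementPair lam p.1 i} :=
        Nat.card_congr ((piSplitAtPair hab).subtypeEquiv hsplit)
    _ = ∑ q : ι × ι, Nat.card {h : ({a, b}ᶜ : Finset α) → ι // q.1 ≠ q.2 ∧
          ∀ i, Fintype.card {x // h x = i} = decrementPair lam q i} :=
        (Nat.card_congr (subtypeProdEquivSigmaSubtype
          fun (q : ι × ι) (h : ({a, b}ᶜ : Finset α) → ι) => q.1 ≠ q.2 ∧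
            ∀ i, Fintype.card {x // h x = i} = decrementPair lam q i)).trans Nat.card_sigma
    _ = _ := by
        rw [sum_filter]
        refine sum_congr rfl fun q _ => ?_
        split_ifs with hq
        · simp only [hq, ne_eq, not_false_eq_true, true_and]
          apply card_fiberCard_eq_multinomial
          have := sum_decrementPair_add_two hq (hpos q.1) (hpos q.2)
          omega
        · simp [hq]

end PairOfPoints

theorem sum_filter_ne_eq_two_nsmul_sum_filter_lt {ι M : Type*} [Fintype ι] [LinearOrder ι]
    [AddCommMonoid M] (F : ι × ι → M) (hF : ∀ q, F q.swap = F q) :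
    ∑ q ∈ univ.filter (fun q : ι × ι => q.1 ≠ q.2), F q =
      2 • ∑ q ∈ univ.filter (fun q : ι × ι => q.1 < q.2), F q := by
  have hsplit : univ.filter (fun q : ι × ι => q.1 ≠ q.2) =
      univ.filter (fun q => q.1 < q.2) ∪ univ.filter (fun q => q.2 < q.1) := by
    ext q
    simp only [mem_filter, mem_union, mem_univ, true_and]
    exact ne_iff_lt_or_gt
  rw [hsplit, sum_union (disjoint_filter.mpr fun q _ h => lt_asymm h), two_nsmul]
  congr 1
  exact sum_equiv (Equiv.prodComm ι ι) (by simp) fun q _ => (hF q).symm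

theorem comp_swap_eq_self_iff {α β : Type*} [DecidableEq α] {f : α → β} {a b : α} :
    f ∘ swap a b = f ↔ f a = f b := by
  refine ⟨fun h => by simpa using (congrFun h a).symm, fun h => funext fun x => ?_⟩
  rcases eq_or_ne x a with rfl | ha
  · simp [h]
  rcases eq_or_ne x b with rfl | hb
  · simp [h]
  · simp [swap_apply_of_ne_of_ne ha hb]

theorem card_subtype_finset_eq_card_filter {α : Type*} (s : Finset α) (p : α → Prop)
    [DecidablePred p] :
    Fintype.card {x : s // p x} = #(s.filter p) := by
  rw [Fintype.card_subtype, card_filter, card_filter,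
    sum_coe_sort s fun x => if p x then 1 else 0]

def finsetFunEquiv (s : Finset ℕ) (l : ℕ) :
    {f : ℕ → ℕ // (∀ x, x ∉ s → f x = 0) ∧ ∀ x ∈ s, f x ∈ Icc 1 l} ≃ (s → Fin l) where
  toFun f x := ⟨f.1 x - 1, by have := mem_Icc.mp (f.2.2 x x.2); omega⟩
  invFun g := ⟨fun x => if h : x ∈ s then g ⟨x, h⟩ + 1 else 0, fun x hx => dif_neg hx,
    fun x hx => by simp [hx]⟩
  left_inv f := by
    ext x
    by_cases hx : x ∈ s
    · have := mem_Icc.mp (f.2.2 x hx)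
      simp [hx]
      omega
    · simp [hx, f.2.1 x hx]
  right_inv g := by
    ext x
    simp

theorem card_isOSP_and_ne {n l : ℕ} (lam : Fin l → ℕ) (hn : 2 ≤ n) :
    Nat.card {f : ℕ → ℕ // IsOSP n l lam f ∧ f 1 ≠ f 2} =
      Nat.card {g : Icc 1 n → Fin l // (∀ i, Fintype.card {x // g x = i} = lam i) ∧
        g ⟨1, by simp; omega⟩ ≠ g ⟨2, by simp; omega⟩} := by
  have h1 : 1 ∈ Icc 1 n := by simp; omega
  have h2 : 2 ∈ Icc 1 n := by simp; omega
  refine Nat.card_congr <| (subtypeSubtypeEquivSubtype fun hf => ⟨hf.1.1, hf.1.2.1⟩).symm.trans <|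
    (finsetFunEquiv (Icc 1 n) l).subtypeEquiv fun f => ?_
  have hf : ∀ x ∈ Icc 1 n, 1 ≤ f.1 x ∧ f.1 x ≤ l := fun x hx => mem_Icc.mp (f.2.2 x hx)
  refine and_congr ((and_iff_right f.2.1).trans <| (and_iff_right f.2.2).trans <|
    forall_congr' fun i => ?_) (not_congr ?_)
  · rw [← card_subtype_finset_eq_card_filter]
    refine Eq.congr_left (Fintype.card_congr (Equiv.subtypeEquivRight fun x => ?_))
    have := hf x x.2
    simp only [finsetFunEquiv, coe_fn_mk, Fin.ext_iff]
    omega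
  · have := hf 1 h1
    have := hf 2 h2
    simp only [finsetFunEquiv, coe_fn_mk, Fin.ext_iff]
    omega

theorem movedCount_eq_two_mul_sum_general
    (n : ℕ) (hn : 2 ≤ n) (l : ℕ) (lam : Fin l → ℕ)
    (hpos : ∀ i, 0 < lam i) (hsum : ∑ i, lam i = n) :
    movedCount n l lam =
      2 * ∑ q ∈ Finset.univ.filter fun q : Fin l × Fin l => q.1 < q.2,
        Nat.multinomial Finset.univ
          (Function.update (Function.update lam q.1 (lam q.1 - 1)) q.2
            (lam q.2 - 1)) ∧
    (PermChiral n l lam ↔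
      Odd (∑ q ∈ Finset.univ.filter fun q : Fin l × Fin l => q.1 < q.2,
        Nat.multinomial Finset.univ
          (Function.update (Function.update lam q.1 (lam q.1 - 1)) q.2
            (lam q.2 - 1)))) := by
  have hcount : movedCount n l lam = 2 * ∑ q ∈ univ.filter fun q : Fin l × Fin l => q.1 < q.2,
      Nat.multinomial univ (decrementPair lam q) :=
    calc movedCount n l lam = Nat.card {f : ℕ → ℕ // IsOSP n l lam f ∧ f 1 ≠ f 2} := by
          simp only [movedCount, ne_eq, comp_swap_eq_self_iff]
      _ = _ := card_isOSP_and_ne lam hn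
      _ = ∑ q ∈ univ.filter fun q : Fin l × Fin l => q.1 ≠ q.2,
          Nat.multinomial univ (decrementPair lam q) :=
        card_fiberCard_eq_and_ne (by simp) hpos (by simpa using hsum)
      _ = _ := by
        rw [sum_filter_ne_eq_two_nsmul_sum_filter_lt _ fun q => by rw [decrementPair_swap],
          smul_eq_mul]
  refine ⟨hcount, ?_⟩
  rw [PermChiral, hcount, Nat.odd_iff]
  exact (by omega : ∀ S : ℕ, 2 * S % 4 = 2 ↔ S % 2 = 1) _

theorem movedCount_eq_two_mul_sum
    (n : ℕ) (hn : 2 ≤ n) (l : ℕ) (lam : Fin l → ℕ)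
    (hpos : ∀ i, 0 < lam i) (hanti : Antitone lam) (hsum : ∑ i, lam i = n) :
    movedCount n l lam =
      2 * ∑ q ∈ Finset.univ.filter fun q : Fin l × Fin l => q.1 < q.2,
        Nat.multinomial Finset.univ
          (Function.update (Function.update lam q.1 (lam q.1 - 1)) q.2
            (lam q.2 - 1)) ∧
    (PermChiral n l lam ↔
      Odd (∑ q ∈ Finset.univ.filter fun q : Fin l × Fin l => q.1 < q.2,
        Nat.multinomial Finset.univ
          (Function.update (Function.update lam q.1 (lam q.1 - 1)) q.2
            (lam q.2 - 1)))) :=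
  movedCount_eq_two_mul_sum_general n hn l lam hpos hsum

end ChiralPaper
end

section
/- For all integers n ≥ 0 and j ≥ 0, ∑_{i=0}^{n} binom(n,i)·B_{n+j−i} = ∑_{i=0}^{j} (−1)^i·binom(j,i)·B_{n+1+j−i}; that is, the left-hand side equals the j-th finite difference (Δ^j B)_{n+1} of the Bell number sequence evaluated at n+1. -/
/-!
Let `φ : ℤ[X] → ℤ` be the linear functional with `φ (X ^ k) = B_k`. Bell's recurrence
`B_{k+1} = ∑ C(k, i) B_{k-i}`, obtained by splitting off the block that contains a fixed point,
says exactly that `φ (X * p) = φ (p.comp (X + 1))`. For `p = X ^ n * (X - 1) ^ j` the two sides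
expand to the right- and left-hand sides of the identity.
-/

open Finset Polynomial

namespace Finpartition

variable {α : Type*} [DecidableEq α] {s b : Finset α}

lemma parts_avoid_of_mem (P : Finpartition s) (hb : b ∈ P.parts) :
    (P.avoid b).parts = P.parts.erase b := by
  ext c
  rw [mem_avoid, mem_erase]
  constructor
  · rintro ⟨d, hd, hdb, rfl⟩
    have hne : d ≠ b := by rintro rfl; exact hdb le_rfl
    have hdisj : Disjoint d b := P.disjoint hd hb hne
    rw [sdiff_eq_self_of_disjoint hdisj]
    exact ⟨hne, hd⟩
  · rintro ⟨hne, hc⟩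
    have hdisj : Disjoint c b := P.disjoint hc hb hne
    exact ⟨c, hc, fun hcb => P.ne_bot hc (hdisj.eq_bot_of_le hcb), sdiff_eq_self_of_disjoint hdisj⟩

def partEqEquiv {a : α} (hab : a ∈ b) (hbs : b ⊆ s) :
    {P : Finpartition s // P.part a = b} ≃ Finpartition (s \ b) where
  toFun P := P.1.avoid b
  invFun Q := ⟨Q.extend (ne_empty_of_mem hab) sdiff_disjoint (sdiff_union_of_subset hbs),
    part_eq_of_mem _ (mem_insert_self _ _) hab⟩
  left_inv := by
    rintro ⟨P, rfl⟩
    have hb : P.part a ∈ P.parts := P.part_mem.2 (hbs hab)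
    exact Subtype.ext <| Finpartition.ext <| by
      rw [extend_parts, parts_avoid_of_mem _ hb, insert_erase hb]
  right_inv Q := by
    have hbQ : b ∉ Q.parts := fun h => (mem_sdiff.1 (Q.le h hab)).2 hab
    exact Finpartition.ext <| by
      rw [parts_avoid_of_mem _ (mem_insert_self _ _), extend_parts, erase_insert hbQ]

lemma card_eq_sum_powerset_erase {a : α} (ha : a ∈ s) :
    Fintype.card (Finpartition s) =
      ∑ t ∈ (s.erase a).powerset, Fintype.card (Finpartition (s \ insert a t)) := by
  rw [← card_univ, card_eq_sum_card_fiberwise (f := fun P => (P.part a).erase a)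
    fun P _ => mem_powerset.2 (erase_subset_erase a (P.part_subset a))]
  refine sum_congr rfl fun t ht => ?_
  have hat : a ∉ t := fun h => notMem_erase a s (mem_powerset.1 ht h)
  have hts : insert a t ⊆ s := insert_subset ha ((mem_powerset.1 ht).trans (erase_subset a s))
  rw [← Fintype.card_congr (partEqEquiv (mem_insert_self a t) hts), Fintype.card_subtype]
  exact congrArg card (filter_congr fun P _ => erase_eq_iff_eq_insert (P.mem_part_self.2 ha) hat)

theorem card_eq_bell (s : Finset α) : Fintype.card (Finpartition s) = Nat.bell #s := by
  induction s using Finset.strongInduction with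
  | H s ih =>
  rcases s.eq_empty_or_nonempty with rfl | ⟨a, ha⟩
  · rw [card_empty, Nat.bell_zero]
    exact Fintype.card_unique (α := Finpartition (⊥ : Finset α))
  have hcard : #(s.erase a) + 1 = #s := card_erase_add_one ha
  calc Fintype.card (Finpartition s)
      = ∑ t ∈ (s.erase a).powerset, Nat.bell (#(s.erase a) - #t) := by
        rw [card_eq_sum_powerset_erase ha]
        refine sum_congr rfl fun t ht => ?_
        have hts : insert a t ⊆ s :=
          insert_subset ha ((mem_powerset.1 ht).trans (erase_subset a s))
        rw [ih _ (sdiff_ssubset hts (insert_nonempty a t)), card_sdiff_of_subset hts,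
          card_insert_of_notMem fun h => notMem_erase a s (mem_powerset.1 ht h)]
        congr 1
        omega
    _ = Nat.bell #s := by
        rw [sum_powerset_apply_card (fun k => Nat.bell (#(s.erase a) - k)),
          ← hcard, Nat.bell_succ, Nat.range_succ_eq_Iic]
        simp only [smul_eq_mul]

end Finpartition

namespace Polynomial

variable {R : Type*} [CommSemiring R]

noncomputable def bellFunctional : R[X] →ₗ[R] R :=
  lsum fun k => (Nat.bell k : R) • LinearMap.id

lemma bellFunctional_monomial (k : ℕ) (c : R) :
    bellFunctional (monomial k c) = c * Nat.bell k := by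
  rw [bellFunctional, lsum_apply, sum_monomial_index] <;> simp [mul_comm]

lemma bellFunctional_X_pow_mul_C_add_X_pow (a m : ℕ) (c : R) :
    bellFunctional (X ^ a * (C c + X) ^ m) =
      ∑ i ∈ range (m + 1), c ^ i * m.choose i * Nat.bell (a + m - i) := by
  rw [add_pow, mul_sum, map_sum]
  refine sum_congr rfl fun i hi => ?_
  have hterm : X ^ a * ((C c) ^ i * X ^ (m - i) * (m.choose i : R[X])) =
      monomial (a + m - i) (c ^ i * m.choose i) := by
    rw [show a + m - i = a + (m - i) by have := mem_range.1 hi; omega,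
      ← C_mul_X_pow_eq_monomial, C_mul, C_pow, map_natCast, pow_add]
    ring
  rw [hterm, bellFunctional_monomial]

lemma bellFunctional_X_mul (p : R[X]) :
    bellFunctional (X * p) = bellFunctional (p.comp (X + 1)) := by
  induction p using Polynomial.induction_on' with
  | add p q hp hq => rw [mul_add, add_comp, map_add, map_add, hp, hq]
  | monomial k c =>
    have h := bellFunctional_X_pow_mul_C_add_X_pow 0 k (1 : R)
    rw [pow_zero, one_mul, C_1, add_comm] at h
    simp only [one_pow, one_mul, zero_add] at h
    rw [X_mul_monomial, bellFunctional_monomial, monomial_comp, C_mul', map_smul, smul_eq_mul, h,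
      Nat.bell_succ, ← Nat.range_succ_eq_Iic, Nat.cast_sum]
    simp only [Nat.cast_mul]

end Polynomial

namespace ChiralPaper

theorem bell_eq_natBell (k : ℕ) : bell k = Nat.bell k := by
  rw [bell, Nat.card_eq_fintype_card, Finpartition.card_eq_bell, card_univ, Fintype.card_fin]

theorem bell_binomial_sum (n j : ℕ) :
    ∑ i ∈ Finset.range (n + 1), (n.choose i : ℤ) * bell (n + j - i) =
      ∑ i ∈ Finset.range (j + 1),
        (-1) ^ i * (j.choose i : ℤ) * bell (n + 1 + j - i) := by
  have hshift : (X ^ n * (C (-1) + X) ^ j).comp (X + 1) = X ^ j * (C 1 + X) ^ n := by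
    simp only [mul_comp, pow_comp, add_comp, X_comp, neg_comp, one_comp, map_neg, map_one]
    ring
  have h := bellFunctional_X_mul (X ^ n * (C (-1 : ℤ) + X) ^ j)
  rw [← mul_assoc, ← pow_succ', hshift, bellFunctional_X_pow_mul_C_add_X_pow,
    bellFunctional_X_pow_mul_C_add_X_pow] at h
  simp only [one_pow, one_mul, add_comm j n] at h
  simpa only [bell_eq_natBell] using h.symm

end ChiralPaper
end
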